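/- arXiv:1906.10537 — 3 statements merged into one kernel-verified Lean document; each statement's English description precedes it below -/
import Mathlib

section
/- For all positive real numbers a, b, every integer n ≥ 1, and every k with 1 ≤ k ≤ n+1, the determinant of the n×n matrix E_n^k(a,b), obtained by deleting the k-th row of the (n+1)×n matrix E_n(a,b), equals (-1)^{n-k+1}·( det D_{k-1}(a,b)·det D_{n-k+1}(a,b) − b²·det D_{k-2}(a,b)·det D_{n-k}(a,b) ). -/
/-- The `n × n` matrix `D_n(a,b)`. -/
def Dmat (n : ℕ) (a b : ℝ) : Matrix (Fin n) (Fin n) ℝ :=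
  Matrix.of fun i j =>
    if (i : ℕ) = (j : ℕ) then -a
    else if (i : ℕ) + 1 = (j : ℕ) then b
    else if (i : ℕ) = (j : ℕ) + 1 then a
    else if (i : ℕ) = (j : ℕ) + 2 then -b
    else 0

/-- `det D_m(a,b)` extended to integer indices with `det D_{-1}(a,b) = 0`
(and `det D_0(a,b) = 1`, the determinant of the empty matrix). -/
noncomputable def dZ (a b : ℝ) (m : ℤ) : ℝ :=
  if 0 ≤ m then (Dmat m.toNat a b).det else 0

/-- The `(n+1) × n` matrix `E_n(a,b)` (rows indexed by `Fin (n+1)`, columns by `Fin n`). -/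
def Emat (n : ℕ) (a b : ℝ) : Matrix (Fin (n + 1)) (Fin n) ℝ :=
  Matrix.of fun i j =>
    if (i : ℕ) = (j : ℕ) then -a
    else if (i : ℕ) + 1 = (j : ℕ) then b
    else if (i : ℕ) = (j : ℕ) + 1 then a
    else if (i : ℕ) = (j : ℕ) + 2 then -b
    else 0

/-- `E_n^k(a,b)`: the `n × n` matrix obtained from `E_n(a,b)` by deleting the
`k`-th row (rows of `E_n(a,b)` being counted `1,…,n+1`). -/
def Ek (n : ℕ) (a b : ℝ) (k : ℕ) : Matrix (Fin n) (Fin n) ℝ :=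
  Matrix.of fun i j =>
    Emat n a b (if (i : ℕ) + 1 < k then i.castSucc else i.succ) j

/-!
Deleting row `k` from `E_n(a,b)` leaves a matrix whose first `k - 1` rows are those of
`D_{k-1}` and whose remaining rows, shifted one step down the band, form `-D_{n-k+1}ᵀ`; the two
diagonal blocks are coupled only by the corner entries `b` and `-b`. For such a block matrix
`det = det A · det B - x y · (cofactor of A) · (cofactor of B)`, and the two cofactors are
`det D_{k-2}` and `det D_{n-k}`.
-/

open Matrix

section CornerBlocks

variable {R : Type*} [CommRing R] {m n : Type*} [Fintype m] [Fintype n] [DecidableEq m]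
  [DecidableEq n]

theorem det_fromBlocks_single_single (A : Matrix m m R) (B : Matrix n n R) (i i' : m)
    (j j' : n) (x y : R) :
    (fromBlocks A (single i j x) (single j' i' y) B).det =
      A.det * B.det - x * y * A.adjugate i' i * B.adjugate j j' := by
  set N := fromBlocks (A.updateRow i 0) (single i j x) (single j' i' y) B
  have hsplit : (fromBlocks A (single i j x) (single j' i' y) B).det =
      (fromBlocks A 0 (single j' i' y) B).det + N.det := by
    convert det_updateRow_add (fromBlocks A (single i j x) (single j' i' y) B) (Sum.inl i)
      (Sum.elim (A i) 0) (Sum.elim 0 (Pi.single j x)) using 3 <;>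
    ext (r | r) (c | c) <;> simp [N, updateRow_apply, Matrix.single_apply, Pi.single_apply] <;>
    aesop
  -- Swapping the two coupled rows makes `N` block upper triangular.
  have hswap : N.submatrix (Equiv.swap (Sum.inl i) (Sum.inr j')) id =
      fromBlocks (A.updateRow i (Pi.single i' y)) (updateRow 0 i (B j')) 0
        (B.updateRow j' (Pi.single j x)) := by
    ext (r | r) (c | c) <;> simp only [N, submatrix_apply, Equiv.swap_apply_def, id] <;>
    split_ifs <;> simp_all [updateRow_apply, Matrix.single_apply, Pi.single_apply] <;> aesop
  have hN : N.det = -(x * y * A.adjugate i' i * B.adjugate j j') := by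
    have h := det_permute (Equiv.swap (Sum.inl i) (Sum.inr j')) N
    have hy : (Pi.single i' y : m → R) = y • Pi.single i' 1 := by
      rw [← Pi.single_smul', smul_eq_mul, mul_one]
    have hx : (Pi.single j x : n → R) = x • Pi.single j 1 := by
      rw [← Pi.single_smul', smul_eq_mul, mul_one]
    rw [hswap, det_fromBlocks_zero₂₁, Equiv.Perm.sign_swap (by simp), hy, hx,
      det_updateRow_smul, det_updateRow_smul, ← adjugate_apply, ← adjugate_apply] at h
    push_cast at h
    linear_combination h
  rw [hsplit, hN, det_fromBlocks_zero₁₂]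
  ring

theorem det_fromBlocks_single_last_zero {p q : ℕ}
    (A : Matrix (Fin (p + 1)) (Fin (p + 1)) R) (B : Matrix (Fin (q + 1)) (Fin (q + 1)) R)
    (x y : R) :
    (fromBlocks A (single (Fin.last p) 0 x) (single 0 (Fin.last p) y) B).det =
      A.det * B.det - x * y * (A.submatrix Fin.castSucc Fin.castSucc).det *
        (B.submatrix Fin.succ Fin.succ).det := by
  rw [det_fromBlocks_single_single, adjugate_fin_succ_eq_det_submatrix,
    adjugate_fin_succ_eq_det_submatrix]
  simp [← two_mul, pow_mul]

end CornerBlocks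

def band (a b : ℝ) (d : ℤ) : ℝ :=
  if d = 0 then -a else if d = -1 then b else if d = 1 then a else if d = 2 then -b else 0

theorem Dmat_apply (n : ℕ) (a b : ℝ) (i j : Fin n) : Dmat n a b i j = band a b (i - j) := by
  simp only [Dmat, band, of_apply]
  split_ifs <;> first | rfl | omega

theorem Ek_apply (n : ℕ) (a b : ℝ) (k : ℕ) (i j : Fin n) :
    Ek n a b k i j = band a b ((if (i : ℕ) + 1 < k then (i : ℤ) else i + 1) - j) := by
  simp only [Ek, Emat, band, of_apply, apply_ite Fin.val, Fin.val_castSucc, Fin.val_succ]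
  split_ifs <;> first | rfl | omega

theorem Dmat_submatrix_castSucc (n : ℕ) (a b : ℝ) :
    (Dmat (n + 1) a b).submatrix Fin.castSucc Fin.castSucc = Dmat n a b := by
  ext i j
  simp [Dmat_apply]

theorem Dmat_submatrix_succ (n : ℕ) (a b : ℝ) :
    (Dmat (n + 1) a b).submatrix Fin.succ Fin.succ = Dmat n a b := by
  ext i j
  simp [Dmat_apply]

theorem Ek_one (n : ℕ) (a b : ℝ) : Ek n a b 1 = -(Dmat n a b)ᵀ := by
  ext i j
  simp only [Ek_apply, Dmat_apply, Matrix.neg_apply, Matrix.transpose_apply, band]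
  split_ifs <;> first | omega | simp

theorem Ek_of_le {n k : ℕ} (a b : ℝ) (h : n + 1 ≤ k) : Ek n a b k = Dmat n a b := by
  ext i j
  rw [Ek_apply, Dmat_apply, if_pos (by omega)]

theorem Ek_eq_fromBlocks (p q : ℕ) (a b : ℝ) :
    Ek (p + 1 + (q + 1)) a b (p + 2) =
      (fromBlocks (Dmat (p + 1) a b) (single (Fin.last p) 0 b) (single 0 (Fin.last p) (-b))
        (-(Dmat (q + 1) a b)ᵀ)).submatrix finSumFinEquiv.symm finSumFinEquiv.symm := by
  ext i j
  induction i using Fin.addCases <;> induction j using Fin.addCases <;>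
  simp only [submatrix_apply, finSumFinEquiv_symm_apply_castAdd, finSumFinEquiv_symm_apply_natAdd,
    fromBlocks_apply₁₁, fromBlocks_apply₁₂, fromBlocks_apply₂₁, fromBlocks_apply₂₂, Ek_apply,
    Dmat_apply, Matrix.single_apply, Matrix.neg_apply, Matrix.transpose_apply, Fin.val_castAdd,
    Fin.val_natAdd, Fin.ext_iff, Fin.val_last, Fin.val_zero, band] <;>
  push_cast <;> split_ifs <;> first | rfl | omega | simp

theorem det_Ek_succ_add_succ (p q : ℕ) (a b : ℝ) :
    (Ek (p + 1 + (q + 1)) a b (p + 2)).det =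
      (-1) ^ (q + 1) * ((Dmat (p + 1) a b).det * (Dmat (q + 1) a b).det -
        b ^ 2 * (Dmat p a b).det * (Dmat q a b).det) := by
  rw [Ek_eq_fromBlocks, det_submatrix_equiv_self, det_fromBlocks_single_last_zero,
    Dmat_submatrix_castSucc,
    show (-(Dmat (q + 1) a b)ᵀ).submatrix Fin.succ Fin.succ = -(Dmat q a b)ᵀ by
      rw [← Dmat_submatrix_succ q a b]; rfl]
  simp only [det_neg, det_transpose, Fintype.card_fin]
  ring

@[simp]
theorem dZ_natCast (a b : ℝ) (n : ℕ) : dZ a b n = (Dmat n a b).det := by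
  simp [dZ]

@[simp]
theorem dZ_neg_one (a b : ℝ) : dZ a b (-1) = 0 := by
  simp [dZ]

theorem det_Ek_add (p m : ℕ) (a b : ℝ) :
    (Ek (p + m) a b (p + 1)).det =
      (-1) ^ m * (dZ a b p * dZ a b m - b ^ 2 * dZ a b (p - 1) * dZ a b (m - 1)) := by
  rw [dZ_natCast, dZ_natCast]
  rcases p with _ | p
  · rw [Nat.zero_add]
    simp [Ek_one, det_neg]
  rcases m with _ | q
  · simp [Ek_of_le]
  · rw [det_Ek_succ_add_succ]
    simp

theorem stmt1_general (a b : ℝ) (n : ℕ)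
    (k : ℕ) (hk1 : 1 ≤ k) (hk2 : k ≤ n + 1) :
    (Ek n a b k).det =
      (-1 : ℝ) ^ ((n : ℤ) - (k : ℤ) + 1) *
        (dZ a b ((k : ℤ) - 1) * dZ a b ((n : ℤ) - (k : ℤ) + 1) -
          b ^ 2 * dZ a b ((k : ℤ) - 2) * dZ a b ((n : ℤ) - (k : ℤ))) := by
  obtain ⟨p, rfl⟩ : ∃ p, k = p + 1 := ⟨k - 1, by omega⟩
  obtain ⟨m, rfl⟩ : ∃ m, n = p + m := ⟨n - p, by omega⟩
  push_cast
  rw [show (p + m - (p + 1) + 1 : ℤ) = m by ring, show (p + 1 - 1 : ℤ) = p by ring,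
    show (p + 1 - 2 : ℤ) = p - 1 by ring, show (p + m - (p + 1) : ℤ) = m - 1 by ring,
    zpow_natCast, det_Ek_add]

theorem stmt1 (a b : ℝ) (ha : 0 < a) (hb : 0 < b) (n : ℕ) (hn : 1 ≤ n)
    (k : ℕ) (hk1 : 1 ≤ k) (hk2 : k ≤ n + 1) :
    (Ek n a b k).det =
      (-1 : ℝ) ^ ((n : ℤ) - (k : ℤ) + 1) *
        (dZ a b ((k : ℤ) - 1) * dZ a b ((n : ℤ) - (k : ℤ) + 1) -
          b ^ 2 * dZ a b ((k : ℤ) - 2) * dZ a b ((n : ℤ) - (k : ℤ))) :=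
  stmt1_general a b n k hk1 hk2
end

section
/- Let a be a positive real number and suppose α, β, γ are three pairwise distinct complex numbers such that x³ + a·x² + a·x + 1 = (x−α)(x−β)(x−γ) as polynomials. Then for every integer k ≥ 1, d_k = 1/(α^{k+1}(α−β)(γ−α)) + 1/(β^{k+1}(α−β)(β−γ)) + 1/(γ^{k+1}(γ−α)(β−γ)). -/
section Dmat

variable (a b : ℝ)

lemma Dmat_apply_of_shift {m M : ℕ} (c : ℕ) (i j : Fin m) (I J : Fin M)
    (hI : (I : ℕ) = i + c) (hJ : (J : ℕ) = j + c) :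
    Dmat M a b I J = Dmat m a b i j := by
  simp only [Dmat, Matrix.of_apply, hI, hJ]
  split_ifs <;> first | rfl | omega

lemma Dmat_apply_of_far {M : ℕ} (I J : Fin M) (h : (J : ℕ) + 2 < I ∨ (I : ℕ) + 1 < J) :
    Dmat M a b I J = 0 := by
  simp only [Dmat, Matrix.of_apply]
  split_ifs <;> first | rfl | omega

lemma det_Dmat_two : (Dmat 2 a b).det = a ^ 2 - a * b := by
  have h : Dmat 2 a b = !![-a, b; a, -a] := by
    ext i j; fin_cases i <;> fin_cases j <;> simp [Dmat]
  rw [h, Matrix.det_fin_two_of]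
  ring

/-- The minor of `D_{n+3}` on rows `1, 3, 4, …` and columns `2, 3, …`. -/
lemma det_Dmat_submatrix_succ_succAbove_one (n : ℕ) :
    ((Dmat (n + 3) a b).submatrix (Fin.succ ∘ Fin.succAbove 1) (Fin.succAbove 1 ∘ Fin.succ)).det
      = b * (Dmat n a b).det := by
  rw [Matrix.det_succ_row_zero, Fin.sum_univ_succ]
  have hz : ∀ x : Fin n, Dmat (n + 3) a b 1 x.succ.succ.succ = 0 := fun x =>
    Dmat_apply_of_far a b _ _ (by simp)
  have h12 : Dmat (n + 3) a b 1 2 = b := by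
    simp [Dmat, Nat.mod_eq_of_lt (show 2 < n + 3 by omega)]
  have hminor : (Dmat (n + 3) a b).submatrix ((Fin.succ ∘ Fin.succAbove 1) ∘ Fin.succ)
      ((Fin.succAbove 1 ∘ Fin.succ) ∘ Fin.succ) = Dmat n a b := by
    ext i j
    exact Dmat_apply_of_shift a b 3 i j _ _ (by simp [Fin.succAbove]) (by simp [Fin.succAbove])
  simp [hz, h12, hminor]

/-- The `(0, 1)` minor of `D_{n+3}`. -/
lemma det_Dmat_submatrix_succ_succAbove (n : ℕ) :
    ((Dmat (n + 3) a b).submatrix Fin.succ (Fin.succAbove 1)).det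
      = a * (Dmat (n + 1) a b).det + b ^ 2 * (Dmat n a b).det := by
  rw [Matrix.det_succ_column_zero, Fin.sum_univ_succ, Fin.sum_univ_succ]
  have hz : ∀ x : Fin n, Dmat (n + 3) a b x.succ.succ.succ 0 = 0 := fun x =>
    Dmat_apply_of_far a b _ _ (by simp)
  have h10 : Dmat (n + 3) a b 1 0 = a := by simp [Dmat]
  have h20 : Dmat (n + 3) a b 2 0 = -b := by
    simp [Dmat, Nat.mod_eq_of_lt (show 2 < n + 3 by omega)]
  have hminor : ((Dmat (n + 3) a b).submatrix Fin.succ (Fin.succAbove 1)).submatrix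
      Fin.succ Fin.succ = Dmat (n + 1) a b := by
    ext i j
    exact Dmat_apply_of_shift a b 2 i j _ _ (by simp) (by simp [Fin.succAbove])
  simp only [Fin.coe_ofNat_eq_mod, Nat.zero_mod, pow_zero, Matrix.submatrix_apply,
    Fin.succ_zero_eq_one, ne_eq, one_ne_zero, not_false_eq_true, Fin.succAbove_ne_zero_zero, h10,
    one_mul, Fin.succAbove_zero, hminor, Nat.one_mod, pow_one, Fin.succ_one_eq_two, h20, mul_neg,
    neg_mul, neg_neg, Matrix.submatrix_submatrix, det_Dmat_submatrix_succ_succAbove_one,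
    Fin.val_succ, hz, mul_zero, zero_mul, Finset.sum_const_zero, add_zero]
  ring

lemma det_Dmat_add_three (n : ℕ) :
    (Dmat (n + 3) a b).det =
      -a * (Dmat (n + 2) a b).det - a * b * (Dmat (n + 1) a b).det - b ^ 3 * (Dmat n a b).det := by
  rw [Matrix.det_succ_row_zero, Fin.sum_univ_succ, Fin.sum_univ_succ]
  have hz : ∀ j : Fin (n + 1), Dmat (n + 3) a b 0 j.succ.succ = 0 := fun j =>
    Dmat_apply_of_far a b _ _ (by simp)
  have h00 : Dmat (n + 3) a b 0 0 = -a := by simp [Dmat]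
  have h01 : Dmat (n + 3) a b 0 1 = b := by simp [Dmat]
  have hminor : (Dmat (n + 3) a b).submatrix Fin.succ Fin.succ = Dmat (n + 2) a b := by
    ext i j
    exact Dmat_apply_of_shift a b 1 i j _ _ (by simp) (by simp)
  simp only [Fin.coe_ofNat_eq_mod, Nat.zero_mod, pow_zero, h00, mul_neg, one_mul,
    Fin.succAbove_zero, hminor, neg_mul, Fin.succ_zero_eq_one, Nat.one_mod, pow_one, h01,
    det_Dmat_submatrix_succ_succAbove, Fin.val_succ, hz, mul_zero, zero_mul,
    Finset.sum_const_zero, add_zero]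
  ring

end Dmat

namespace LinearRecurrence

variable {K : Type*} [Field K]

lemma isSolution_order_three_iff (c₀ c₁ c₂ : K) (s : ℕ → K) :
    (⟨3, ![c₀, c₁, c₂]⟩ : LinearRecurrence K).IsSolution s ↔
      ∀ n, s (n + 3) = c₀ * s n + c₁ * s (n + 1) + c₂ * s (n + 2) := by
  simp [IsSolution, Fin.sum_univ_three]

lemma IsSolution.comp_add_right {E : LinearRecurrence K} {s : ℕ → K} (h : E.IsSolution s)
    (m : ℕ) : E.IsSolution (fun n => s (n + m)) := fun n => by
  simpa only [add_right_comm] using h (n + m)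

end LinearRecurrence

section DivDiff

variable {K : Type*} [Field K]

/-- The divided difference of `t ↦ t ^ n` at `u, v, w`, i.e. the complete homogeneous
symmetric polynomial `h_{n-2}(u, v, w)`. -/
def divDiffPow (u v w : K) (n : ℕ) : K :=
  u ^ n / ((u - v) * (u - w)) + v ^ n / ((v - u) * (v - w)) + w ^ n / ((w - u) * (w - v))

variable {u v w : K}

lemma divDiffPow_zero (huv : u ≠ v) (hvw : v ≠ w) (hwu : w ≠ u) : divDiffPow u v w 0 = 0 := by
  have := sub_ne_zero.2 huv; have := sub_ne_zero.2 hvw; have := sub_ne_zero.2 hwu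
  rw [divDiffPow]; field_simp; ring

lemma divDiffPow_one (huv : u ≠ v) (hvw : v ≠ w) (hwu : w ≠ u) : divDiffPow u v w 1 = 0 := by
  have := sub_ne_zero.2 huv; have := sub_ne_zero.2 hvw; have := sub_ne_zero.2 hwu
  rw [divDiffPow]; field_simp; ring

lemma divDiffPow_two (huv : u ≠ v) (hvw : v ≠ w) (hwu : w ≠ u) : divDiffPow u v w 2 = 1 := by
  have := sub_ne_zero.2 huv; have := sub_ne_zero.2 hvw; have := sub_ne_zero.2 hwu
  rw [divDiffPow]; field_simp; ring

lemma LinearRecurrence.IsSolution.divDiffPow {E : LinearRecurrence K}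
    (hu : E.IsSolution (u ^ ·)) (hv : E.IsSolution (v ^ ·)) (hw : E.IsSolution (w ^ ·)) :
    E.IsSolution (divDiffPow u v w) := by
  simp only [E.is_sol_iff_mem_solSpace] at *
  have key : _root_.divDiffPow u v w = ((u - v) * (u - w))⁻¹ • (u ^ ·) +
      ((v - u) * (v - w))⁻¹ • (v ^ ·) + ((w - u) * (w - v))⁻¹ • (w ^ ·) := by
    ext n; simp [_root_.divDiffPow, div_eq_inv_mul]
  rw [key]
  exact add_mem (add_mem (Submodule.smul_mem _ _ hu) (Submodule.smul_mem _ _ hv))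
    (Submodule.smul_mem _ _ hw)

lemma inv_pow_div_inv_sub_mul_inv_sub {x y z : K} (hx : x ≠ 0) (hy : y ≠ 0) (hz : z ≠ 0)
    (hxy : x ≠ y) (hxz : x ≠ z) (n : ℕ) :
    x⁻¹ ^ (n + 2) / ((x⁻¹ - y⁻¹) * (x⁻¹ - z⁻¹)) = x * y * z / (x ^ (n + 1) * (x - y) * (x - z)) := by
  have := sub_ne_zero.2 hxy; have := sub_ne_zero.2 hxz
  rw [inv_sub_inv hx hy, inv_sub_inv hx hz, inv_pow]
  field_simp
  ring

lemma divDiffPow_inv_add_two (hu : u ≠ 0) (hv : v ≠ 0) (hw : w ≠ 0)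
    (huv : u ≠ v) (hvw : v ≠ w) (hwu : w ≠ u) (n : ℕ) :
    divDiffPow u⁻¹ v⁻¹ w⁻¹ (n + 2) = -(u * v * w) *
      (1 / (u ^ (n + 1) * (u - v) * (w - u)) + 1 / (v ^ (n + 1) * (u - v) * (v - w)) +
        1 / (w ^ (n + 1) * (w - u) * (v - w))) := by
  have := sub_ne_zero.2 huv; have := sub_ne_zero.2 hvw; have := sub_ne_zero.2 hwu
  rw [divDiffPow, inv_pow_div_inv_sub_mul_inv_sub hu hv hw huv hwu.symm,
    inv_pow_div_inv_sub_mul_inv_sub hv hu hw huv.symm hvw,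
    inv_pow_div_inv_sub_mul_inv_sub hw hu hv hwu hvw.symm]
  field_simp
  ring

end DivDiff

/-- `d (n + 3) = -a * d (n + 2) - a * d (n + 1) - d n`, with characteristic polynomial
`X ^ 3 + a * X ^ 2 + a * X + 1`. -/
def dRecurrence {K : Type*} [Field K] (a : K) : LinearRecurrence K := ⟨3, ![-1, -a, -a]⟩

lemma dRecurrence_isSolution_det_Dmat (a : ℝ) :
    (dRecurrence (a : ℂ)).IsSolution fun n => ((Dmat n a 1).det : ℂ) := by
  rw [dRecurrence, LinearRecurrence.isSolution_order_three_iff]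
  intro n
  simp only [det_Dmat_add_three]
  push_cast
  ring

lemma dRecurrence_isSolution_inv_pow {K : Type*} [Field K] {a x : K}
    (hx : x ^ 3 + a * x ^ 2 + a * x + 1 = 0) : (dRecurrence a).IsSolution (x⁻¹ ^ ·) := by
  have hx0 : x ≠ 0 := by rintro rfl; simp at hx
  rw [dRecurrence, LinearRecurrence.isSolution_order_three_iff]
  intro n
  have hx' : x⁻¹ ^ 3 = -1 - a * x⁻¹ - a * x⁻¹ ^ 2 := by
    field_simp
    linear_combination hx
  simp only [pow_add, hx']
  ring

lemma det_Dmat_eq_of_isSolution (a : ℝ) {s : ℕ → ℂ} (hs : (dRecurrence (a : ℂ)).IsSolution s)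
    (h0 : s 0 = 0) (h1 : s 1 = 0) (h2 : s 2 = 1) (n : ℕ) :
    ((Dmat n a 1).det : ℂ) = s (n + 2) := by
  have hrec := (LinearRecurrence.isSolution_order_three_iff _ _ _ _).1 hs
  have h3 : s 3 = -a := by linear_combination hrec 0 - h0 - a * h1 - a * h2
  have h4 : s 4 = a ^ 2 - a := by linear_combination hrec 1 - h1 - a * h2 - a * h3
  revert n
  rw [← funext_iff, LinearRecurrence.eq_iff_eqOn_range_order _ _ _ (dRecurrence_isSolution_det_Dmat a)
    (hs.comp_add_right 2)]
  intro n hn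
  simp only [Finset.coe_range, Set.mem_Iio, dRecurrence] at hn
  interval_cases n
  · simp [h2]
  · simp [h3, Dmat]
  · simp [h4, det_Dmat_two]

theorem stmt4_general (a : ℝ) (α β γ : ℂ)
    (hαβ : α ≠ β) (hβγ : β ≠ γ) (hγα : γ ≠ α)
    (hfact : (Polynomial.X ^ 3 + Polynomial.C (a : ℂ) * Polynomial.X ^ 2 +
        Polynomial.C (a : ℂ) * Polynomial.X + 1 : Polynomial ℂ) =
      (Polynomial.X - Polynomial.C α) * (Polynomial.X - Polynomial.C β) *
        (Polynomial.X - Polynomial.C γ))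
    (k : ℕ) :
    ((Dmat k a 1).det : ℂ) =
      1 / (α ^ (k + 1) * (α - β) * (γ - α)) +
      1 / (β ^ (k + 1) * (α - β) * (β - γ)) +
      1 / (γ ^ (k + 1) * (γ - α) * (β - γ)) := by
  have hpoly (x : ℂ) : x ^ 3 + a * x ^ 2 + a * x + 1 = (x - α) * (x - β) * (x - γ) := by
    simpa using congrArg (Polynomial.eval x) hfact
  have hprod : α * β * γ = -1 := by linear_combination hpoly 0
  have hα : α ≠ 0 := by rintro rfl; simp at hprod
  have hβ : β ≠ 0 := by rintro rfl; simp at hprod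
  have hγ : γ ≠ 0 := by rintro rfl; simp at hprod
  have hroot (x : ℂ) (hx : x = α ∨ x = β ∨ x = γ) : x ^ 3 + a * x ^ 2 + a * x + 1 = 0 := by
    rw [hpoly]; rcases hx with rfl | rfl | rfl <;> ring
  have hsol := LinearRecurrence.IsSolution.divDiffPow
    (dRecurrence_isSolution_inv_pow (hroot α (by simp)))
    (dRecurrence_isSolution_inv_pow (hroot β (by simp)))
    (dRecurrence_isSolution_inv_pow (hroot γ (by simp)))
  have hαβ' := inv_injective.ne hαβ
  have hβγ' := inv_injective.ne hβγ
  have hγα' := inv_injective.ne hγα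
  rw [det_Dmat_eq_of_isSolution a hsol (divDiffPow_zero hαβ' hβγ' hγα')
    (divDiffPow_one hαβ' hβγ' hγα') (divDiffPow_two hαβ' hβγ' hγα'),
    divDiffPow_inv_add_two hα hβ hγ hαβ hβγ hγα, hprod, neg_neg, one_mul]

theorem stmt4 (a : ℝ) (ha : 0 < a) (α β γ : ℂ)
    (hαβ : α ≠ β) (hβγ : β ≠ γ) (hγα : γ ≠ α)
    (hfact : (Polynomial.X ^ 3 + Polynomial.C (a : ℂ) * Polynomial.X ^ 2 +
        Polynomial.C (a : ℂ) * Polynomial.X + 1 : Polynomial ℂ) =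
      (Polynomial.X - Polynomial.C α) * (Polynomial.X - Polynomial.C β) *
        (Polynomial.X - Polynomial.C γ))
    (k : ℕ) (hk : 1 ≤ k) :
    ((Dmat k a 1).det : ℂ) =
      1 / (α ^ (k + 1) * (α - β) * (γ - α)) +
      1 / (β ^ (k + 1) * (α - β) * (β - γ)) +
      1 / (γ ^ (k + 1) * (γ - α) * (β - γ)) :=
  stmt4_general a α β γ hαβ hβγ hγα hfact k
end

section
/- Let a be a real number with |a| > 5, and let n ≥ 1 be an integer. Then for all indices 1 ≤ i < j < k ≤ n+3, the n×n matrix B̃_n(a,1)^{i,j,k}, obtained by deleting the i-th, j-th and k-th rows of B̃_n(a,1), has nonzero determinant. -/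
/-- Entry in position `(r, c)` (0-indexed) of the `(n+1) × n` matrix `Ẽ_n(a,1)`. -/
def Etent (a : ℝ) (r c : ℕ) : ℝ :=
  if r = c then a
  else if r + 1 = c then 1
  else if r = c + 1 then a
  else if r = c + 2 then 1
  else 0

/-- The `(n+3) × n` matrix `B̃_n(a,1)`: first row `(1,0,…,0)`, rows `2,…,n+2` are the
rows of `Ẽ_n(a,1)`, last row `(0,…,0,1)`. -/
def Btmat (n : ℕ) (a : ℝ) : Matrix (Fin (n + 3)) (Fin n) ℝ :=
  Matrix.of fun i j =>
    if (i : ℕ) = 0 then (if (j : ℕ) = 0 then 1 else 0)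
    else if (i : ℕ) = n + 2 then (if (j : ℕ) = n - 1 then 1 else 0)
    else Etent a ((i : ℕ) - 1) (j : ℕ)

/-- `B̃_n(a,1)^{i,j,k}`: the `n × n` matrix obtained from `B̃_n(a,1)` by deleting its
`i`-th, `j`-th and `k`-th rows (rows counted `1,…,n+3`, with `i < j < k`). -/
def Btijk (n : ℕ) (a : ℝ) (i j k : ℕ) : Matrix (Fin n) (Fin n) ℝ :=
  Matrix.of fun r c =>
    Btmat n a
      (if (r : ℕ) + 1 < i then r.castSucc.castSucc.castSucc
       else if (r : ℕ) + 2 < j then r.succ.castSucc.castSucc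
       else if (r : ℕ) + 3 < k then r.succ.succ.castSucc
       else r.succ.succ.succ) c

/-!
`B̃_n(a,1)` is the matrix of multiplication by `p = 1 + aX + aX² + X³`, from polynomials of
degree `< n` to polynomials of degree `< n + 3`. A kernel vector `v` of `B̃_n(a,1)^{i,j,k}`, read
as a polynomial `V`, therefore gives `p V = α X^(i-1) + β X^(j-1) + γ X^(k-1)`.
Since `p = (X + 1)(X² + (a - 1)X + 1)` and `|a| > 5`, the roots of `p` are `-1`, `R` and `R⁻¹`
with `|R| ≥ 3`. Evaluating the trinomial at `R` and at `R⁻¹` and comparing absolute values forces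
`α = γ = 0`, and evaluating at `-1` then forces `β = 0`. So `p V = 0`, hence `V = 0`.
-/

open Polynomial Matrix

noncomputable def tentPoly (a : ℝ) : ℝ[X] := X ^ 3 + C a * X ^ 2 + C a * X + 1

lemma coeff_tentPoly (a : ℝ) (t : ℕ) :
    (tentPoly a).coeff t = if t = 0 ∨ t = 3 then 1 else if t = 1 ∨ t = 2 then a else 0 := by
  simp only [tentPoly, coeff_add, coeff_X_pow, coeff_C_mul, coeff_X, coeff_one]
  split_ifs <;> first | omega | simp_all

lemma eval_tentPoly (a x : ℝ) :
    (tentPoly a).eval x = (x + 1) * (x ^ 2 + (a - 1) * x + 1) := by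
  simp only [tentPoly, eval_add, eval_pow, eval_X, eval_mul, eval_C, eval_one]
  ring

lemma Btmat_apply_eq_coeff (n : ℕ) (a : ℝ) (m : Fin (n + 3)) (c : Fin n) :
    Btmat n a m c = (tentPoly a * X ^ (c : ℕ)).coeff m := by
  have hc := c.isLt
  simp only [Btmat, Etent, Matrix.of_apply, coeff_mul_X_pow', coeff_tentPoly]
  split_ifs <;> first | rfl | omega

lemma coeff_tentPoly_mul_ofFn (n : ℕ) (a : ℝ) (v : Fin n → ℝ) (m : ℕ) :
    (tentPoly a * ofFn n v).coeff m = ∑ c : Fin n, (tentPoly a * X ^ (c : ℕ)).coeff m * v c := by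
  simp only [ofFn_eq_sum_monomial, Finset.mul_sum, finsetSum_coeff, ← C_mul_X_pow_eq_monomial,
    mul_left_comm _ (C _), coeff_C_mul, mul_comm (v _)]

lemma Btmat_mulVec_apply (n : ℕ) (a : ℝ) (v : Fin n → ℝ) (m : Fin (n + 3)) :
    (Btmat n a *ᵥ v) m = (tentPoly a * ofFn n v).coeff m := by
  simp only [Matrix.mulVec, dotProduct, Btmat_apply_eq_coeff, coeff_tentPoly_mul_ofFn]

lemma coeff_tentPoly_mul_ofFn_of_le (n : ℕ) (a : ℝ) (v : Fin n → ℝ) {m : ℕ} (hm : n + 3 ≤ m) :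
    (tentPoly a * ofFn n v).coeff m = 0 := by
  rw [coeff_tentPoly_mul_ofFn]
  refine Finset.sum_eq_zero fun c _ => ?_
  have hc := c.isLt
  rw [coeff_mul_X_pow', coeff_tentPoly]
  split_ifs <;> first | omega | simp

def keptRow (n i j k : ℕ) (r : Fin n) : Fin (n + 3) :=
  if (r : ℕ) + 1 < i then r.castSucc.castSucc.castSucc
  else if (r : ℕ) + 2 < j then r.succ.castSucc.castSucc
  else if (r : ℕ) + 3 < k then r.succ.succ.castSucc
  else r.succ.succ.succ

lemma Btijk_mulVec (n : ℕ) (a : ℝ) (i j k : ℕ) (v : Fin n → ℝ) :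
    Btijk n a i j k *ᵥ v = (Btmat n a *ᵥ v) ∘ keptRow n i j k :=
  rfl

lemma exists_keptRow_eq {n i j k : ℕ} (hi : 1 ≤ i) (hij : i < j) (hjk : j < k) (hk : k ≤ n + 3)
    (m : Fin (n + 3)) (hmi : (m : ℕ) + 1 ≠ i) (hmj : (m : ℕ) + 1 ≠ j) (hmk : (m : ℕ) + 1 ≠ k) :
    ∃ r, keptRow n i j k r = m := by
  obtain ⟨m, hm⟩ := m
  simp only at hmi hmj hmk
  refine ⟨⟨m - (if m < i then 0 else if m < j then 1 else if m < k then 2 else 3),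
    by split_ifs <;> omega⟩, ?_⟩
  ext
  simp only [keptRow]
  split_ifs <;> simp <;> omega

lemma tentPoly_mul_ofFn_eq_trinomial {n : ℕ} {a : ℝ} {i j k : ℕ} (hi : 1 ≤ i) (hij : i < j)
    (hjk : j < k) (hk : k ≤ n + 3) {v : Fin n → ℝ} (hv : Btijk n a i j k *ᵥ v = 0) :
    ∃ α β γ : ℝ,
      tentPoly a * ofFn n v = C α * X ^ (i - 1) + C β * X ^ (j - 1) + C γ * X ^ (k - 1) := by
  set f := tentPoly a * ofFn n v
  refine ⟨f.coeff (i - 1), f.coeff (j - 1), f.coeff (k - 1), ext fun m => ?_⟩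
  simp only [coeff_add, coeff_C_mul_X_pow]
  by_cases hm : m = i - 1 ∨ m = j - 1 ∨ m = k - 1
  · rcases hm with rfl | rfl | rfl <;> split_ifs <;> first | omega | ring
  obtain ⟨hmi, hmj, hmk⟩ : m ≠ i - 1 ∧ m ≠ j - 1 ∧ m ≠ k - 1 := by tauto
  rw [if_neg hmi, if_neg hmj, if_neg hmk, add_zero, add_zero]
  rcases lt_or_ge m (n + 3) with hlt | hge
  · obtain ⟨r, hr⟩ := exists_keptRow_eq hi hij hjk hk ⟨m, hlt⟩
      (by simp; omega) (by simp; omega) (by simp; omega)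
    simpa [Btijk_mulVec, hr, Btmat_mulVec_apply] using congrFun hv r
  · exact coeff_tentPoly_mul_ofFn_of_le n a v hge

lemma eq_zero_of_three_term {R α β γ : ℝ} (hR : 3 ≤ |R|) {P Q : ℕ} (hP : P ≠ 0) (hQ : Q ≠ 0)
    (h₁ : α + β * (-1) ^ P + γ * (-1) ^ (P + Q) = 0)
    (h₂ : α + β * R ^ P + γ * R ^ (P + Q) = 0)
    (h₃ : α * R ^ (P + Q) + β * R ^ Q + γ = 0) :
    α = 0 ∧ β = 0 ∧ γ = 0 := by
  set x := |R| ^ P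
  set y := |R| ^ Q
  have hx : 3 ≤ x := hR.trans (le_self_pow₀ (by linarith) hP)
  have hy : 3 ≤ y := hR.trans (le_self_pow₀ (by linarith) hQ)
  have hβ : |β| ≤ |α| + |γ| := calc
    |β| = |β * (-1) ^ P| := by rw [abs_mul, abs_neg_one_pow, mul_one]
    _ = |-(α + γ * (-1) ^ (P + Q))| := by congr 1; linear_combination h₁
    _ ≤ |α| + |γ| := by
      rw [abs_neg]; exact (abs_add_le _ _).trans_eq (by rw [abs_mul, abs_neg_one_pow, mul_one])
  have hγ : |γ| * (x * y) ≤ |α| + |β| * x := calc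
    |γ| * (x * y) = |-(α + β * R ^ P)| := by
      rw [← pow_add, ← abs_pow, ← abs_mul]; congr 1; linear_combination h₂
    _ ≤ |α| + |β| * x := by
      rw [abs_neg]; exact (abs_add_le _ _).trans_eq (by rw [abs_mul, abs_pow])
  have hα : |α| * (x * y) ≤ |β| * y + |γ| := calc
    |α| * (x * y) = |-(β * R ^ Q + γ)| := by
      rw [← pow_add, ← abs_pow, ← abs_mul]; congr 1; linear_combination h₃
    _ ≤ |β| * y + |γ| := by
      rw [abs_neg]; exact (abs_add_le _ _).trans_eq (by rw [abs_mul, abs_pow])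
  -- adding `hα` and `hγ` and using `hβ`: `(|α| + |γ|) * ((x - 1) * (y - 1) - 2) ≤ 0`
  have hαγ : |α| + |γ| ≤ 0 := by
    have hS : 0 ≤ |α| + |γ| := by positivity
    have hxy : 2 ≤ (x - 1) * (y - 1) - 2 := by nlinarith
    nlinarith [mul_le_mul_of_nonneg_right hβ (by linarith : 0 ≤ x + y),
      mul_le_mul_of_nonneg_left hxy hS]
  refine ⟨?_, ?_, ?_⟩ <;> rw [← abs_nonpos_iff] <;> linarith [abs_nonneg α, abs_nonneg γ]

lemma eq_zero_of_trinomial_roots {R α β γ : ℝ} (hR : 3 ≤ |R|) {I J K : ℕ} (hIJ : I < J)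
    (hJK : J < K) (h₁ : α * (-1) ^ I + β * (-1) ^ J + γ * (-1) ^ K = 0)
    (h₂ : α * R ^ I + β * R ^ J + γ * R ^ K = 0)
    (h₃ : α * R⁻¹ ^ I + β * R⁻¹ ^ J + γ * R⁻¹ ^ K = 0) :
    α = 0 ∧ β = 0 ∧ γ = 0 := by
  obtain ⟨P, rfl⟩ := Nat.exists_eq_add_of_lt hIJ
  obtain ⟨Q, rfl⟩ := Nat.exists_eq_add_of_lt hJK
  have hR0 : R ≠ 0 := by rintro rfl; norm_num at hR
  have reduce {x : ℝ} (hx : x ≠ 0)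
      (h : α * x ^ I + β * x ^ (I + P + 1) + γ * x ^ (I + P + 1 + Q + 1) = 0) :
      α + β * x ^ (P + 1) + γ * x ^ (P + 1 + (Q + 1)) = 0 :=
    (mul_eq_zero.mp (by linear_combination h : x ^ I * _ = 0)).resolve_left (pow_ne_zero _ hx)
  have hu (t : ℕ) : R ^ t * R⁻¹ ^ t = 1 := by rw [← mul_pow, mul_inv_cancel₀ hR0, one_pow]
  exact eq_zero_of_three_term hR (Nat.add_one_ne_zero P) (Nat.add_one_ne_zero Q)
    (reduce (by norm_num) h₁) (reduce hR0 h₂) (by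
      linear_combination R ^ (P + 1 + (Q + 1)) * reduce (inv_ne_zero hR0) h₃
        - β * R ^ (Q + 1) * hu (P + 1) - γ * hu (P + 1 + (Q + 1)))

lemma exists_large_root_tentPoly {a : ℝ} (ha : 5 < |a|) :
    ∃ R : ℝ, 3 ≤ |R| ∧ (tentPoly a).eval R = 0 ∧ (tentPoly a).eval R⁻¹ = 0 := by
  suffices ∃ R : ℝ, 3 ≤ |R| ∧ R ^ 2 + (a - 1) * R + 1 = 0 by
    obtain ⟨R, hR, hq⟩ := this
    have hR0 : R ≠ 0 := by rintro rfl; norm_num at hR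
    refine ⟨R, hR, by rw [eval_tentPoly, hq, mul_zero], ?_⟩
    rw [eval_tentPoly]
    field_simp
    linear_combination (1 + R) * hq
  have hD : 12 < (a - 1) ^ 2 - 4 := by
    rcases lt_abs.mp ha with h | h <;> nlinarith
  set s := √((a - 1) ^ 2 - 4)
  have hs : s ^ 2 = (a - 1) ^ 2 - 4 := Real.sq_sqrt (by linarith)
  have hs2 : 2 ≤ s := by nlinarith [Real.sqrt_nonneg ((a - 1) ^ 2 - 4)]
  rcases lt_abs.mp ha with h | h
  · exact ⟨(1 - a - s) / 2, le_abs.mpr (Or.inr (by linarith)), by linear_combination hs / 4⟩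
  · exact ⟨(1 - a + s) / 2, le_abs.mpr (Or.inl (by linarith)), by linear_combination hs / 4⟩

theorem stmt12_general (a : ℝ) (ha : 5 < |a|) (n : ℕ)
    (i j k : ℕ) (hi : 1 ≤ i) (hij : i < j) (hjk : j < k) (hk : k ≤ n + 3) :
    (Btijk n a i j k).det ≠ 0 := by
  rw [Ne, ← Matrix.exists_mulVec_eq_zero_iff]
  rintro ⟨v, hv0, hv⟩
  obtain ⟨α, β, γ, hf⟩ := tentPoly_mul_ofFn_eq_trinomial hi hij hjk hk hv
  have vanish {x : ℝ} (hx : (tentPoly a).eval x = 0) :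
      α * x ^ (i - 1) + β * x ^ (j - 1) + γ * x ^ (k - 1) = 0 := by
    simpa [hx] using (congrArg (eval x) hf).symm
  obtain ⟨R, hR, hRroot, hRinvroot⟩ := exists_large_root_tentPoly ha
  obtain ⟨rfl, rfl, rfl⟩ := eq_zero_of_trinomial_roots hR (by omega : i - 1 < j - 1) (by omega)
    (vanish (by simp [eval_tentPoly])) (vanish hRroot) (vanish hRinvroot)
  have hp : tentPoly a ≠ 0 := fun h => by simpa [h] using eval_tentPoly a 0
  have hv : ofFn n v = ofFn n 0 := by simpa [hp] using hf
  exact hv0 (injective_ofFn n hv)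

theorem stmt12 (a : ℝ) (ha : 5 < |a|) (n : ℕ) (hn : 1 ≤ n)
    (i j k : ℕ) (hi : 1 ≤ i) (hij : i < j) (hjk : j < k) (hk : k ≤ n + 3) :
    (Btijk n a i j k).det ≠ 0 :=
  stmt12_general a ha n i j k hi hij hjk hk
end
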